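/- Suppose (p, x) ∈ ℝ^ℓ × ℝ^n satisfies A_outᵀ p − θᴸ(μ) x = θ⁰(μ), p ≥ 0, and b_outᵀ p > 0, and suppose Y ⊆ { y ∈ ℝ^Q : A_out y ≥ b_out }. Then [θ⁰(μ) + θᴸ(μ) x]ᵀ y ≥ b_outᵀ p > 0 for all y ∈ Y; in particular, if Y = { y : y_q = (vᵀF_q v)/(vᵀF_S v), v ≠ 0 }, then F(x;μ) = Σ_q [θ_q⁰(μ)+θ_qᴸ(μ)x] F_q is positive definite. -/

import Mathlib

open Matrix

open Matrix in
theorem dot_sum_smul {Q N : ℕ} (c : Fin Q → ℝ) (F : Fin Q → Matrix (Fin N) (Fin N) ℝ) (v : Fin N → ℝ) :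
    v ⬝ᵥ (∑ q, c q • F q) *ᵥ v = ∑ q, c q * (v ⬝ᵥ (F q) *ᵥ v) := by
  have h1 : (∑ q, c q • F q) *ᵥ v = ∑ q, c q • ((F q) *ᵥ v) := by
    funext i
    simp only [mulVec, dotProduct, Matrix.sum_apply, Matrix.smul_apply, smul_eq_mul,
      Finset.sum_mul, Finset.sum_apply, Pi.smul_apply, Finset.mul_sum]
    rw [Finset.sum_comm]; exact Finset.sum_congr rfl fun a _ => Finset.sum_congr rfl fun b _ => by ring
  rw [h1]
  simp only [dotProduct, Finset.sum_apply, Pi.smul_apply, smul_eq_mul, Finset.mul_sum]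
  rw [Finset.sum_comm]; exact Finset.sum_congr rfl fun a _ => Finset.sum_congr rfl fun b _ => by ring

/-- If `(p,x)` is feasible for (RF) with `b_outᵀp > 0`, and `Y` is contained in
the polyhedron `{y : A_out y ≥ b_out}`, then `[θ⁰+θᴸx]ᵀ y ≥ b_outᵀ p > 0` for
all `y ∈ Y`; in particular, when `Y` is the Rayleigh-quotient set,
`F(x;μ) = Σ_q (θ⁰_q + θᴸ_q x) F_q` is positive definite. -/
theorem stmt_10 {l Q n N : ℕ}
    (A : Matrix (Fin l) (Fin Q) ℝ) (b : Fin l → ℝ)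
    (θ0 : Fin Q → ℝ) (θL : Fin Q → Fin n → ℝ)
    (F : Fin Q → Matrix (Fin N) (Fin N) ℝ) (hF : ∀ q, (F q).IsSymm)
    (Fs : Matrix (Fin N) (Fin N) ℝ) (hFs : Fs.PosDef)
    (p : Fin l → ℝ) (x : Fin n → ℝ)
    (hfeas : Aᵀ.mulVec p - (fun q => θL q ⬝ᵥ x) = θ0)
    (hp : ∀ i, 0 ≤ p i) (hbp : 0 < b ⬝ᵥ p)
    (hY : {y : Fin Q → ℝ | ∃ v : Fin N → ℝ, v ≠ 0 ∧
            ∀ q, y q = (v ⬝ᵥ (F q).mulVec v) / (v ⬝ᵥ Fs.mulVec v)} ⊆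
          {y | ∀ i, b i ≤ A.mulVec y i}) :
    (∀ y ∈ {y : Fin Q → ℝ | ∃ v : Fin N → ℝ, v ≠ 0 ∧
        ∀ q, y q = (v ⬝ᵥ (F q).mulVec v) / (v ⬝ᵥ Fs.mulVec v)},
      b ⬝ᵥ p ≤ (fun q => θ0 q + θL q ⬝ᵥ x) ⬝ᵥ y) ∧
    (∑ q, (θ0 q + θL q ⬝ᵥ x) • F q).PosDef := by
  have hc : (fun q => θ0 q + θL q ⬝ᵥ x) = Aᵀ.mulVec p := by
    funext q
    have := congrFun hfeas q
    simp only [Pi.sub_apply] at this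
    linarith
  have key : ∀ y ∈ {y : Fin Q → ℝ | ∃ v : Fin N → ℝ, v ≠ 0 ∧
        ∀ q, y q = (v ⬝ᵥ (F q).mulVec v) / (v ⬝ᵥ Fs.mulVec v)},
      b ⬝ᵥ p ≤ (fun q => θ0 q + θL q ⬝ᵥ x) ⬝ᵥ y := by
    intro y hy
    have h1 : (fun q => θ0 q + θL q ⬝ᵥ x) ⬝ᵥ y = p ⬝ᵥ A.mulVec y := by
      rw [hc, mulVec_transpose, ← dotProduct_mulVec]
    rw [h1, dotProduct_comm b p]
    apply Finset.sum_le_sum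
    intro i _
    exact mul_le_mul_of_nonneg_left (hY hy i) (hp i)
  refine ⟨key, posDef_iff_dotProduct_mulVec.mpr ⟨?_, ?_⟩⟩
  · show (∑ q, (θ0 q + θL q ⬝ᵥ x) • F q)ᴴ = _
    rw [conjTranspose_eq_transpose_of_trivial, transpose_sum]
    exact Finset.sum_congr rfl fun q _ => by rw [transpose_smul, (hF q)]
  · intro v hv
    have hFsv : 0 < v ⬝ᵥ Fs.mulVec v := by
      have := hFs.dotProduct_mulVec_pos hv
      simpa using this
    set y : Fin Q → ℝ := fun q => (v ⬝ᵥ (F q).mulVec v) / (v ⬝ᵥ Fs.mulVec v) with hy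
    have hge := key y ⟨v, hv, fun q => rfl⟩
    have hval : star v ⬝ᵥ (∑ q, (θ0 q + θL q ⬝ᵥ x) • F q).mulVec v
        = (v ⬝ᵥ Fs.mulVec v) * ((fun q => θ0 q + θL q ⬝ᵥ x) ⬝ᵥ y) := by
      have hstar : (star v : Fin N → ℝ) = v := by simp
      rw [hstar, dot_sum_smul]
      have hrfl : (fun q => θ0 q + θL q ⬝ᵥ x) ⬝ᵥ y = ∑ q, (θ0 q + θL q ⬝ᵥ x) * y q := rfl
      rw [hrfl, Finset.mul_sum]
      apply Finset.sum_congr rfl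
      intro q _
      have : y q * (v ⬝ᵥ Fs.mulVec v) = v ⬝ᵥ (F q).mulVec v := by
        simp only [hy]
        exact div_mul_cancel₀ _ hFsv.ne'
      rw [← this]
      ring
    rw [hval]
    exact mul_pos hFsv (lt_of_lt_of_le hbp hge)
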